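/- arXiv:2507.12432 — 2 statements merged into one kernel-verified Lean document; each statement's English description precedes it below -/
import Mathlib

section
/- Under the assumptions that y ↦ L(y|X=x) is continuous for ℙ_X-a.e. x and that L(y|X=x) ≤ g(x) for some g ∈ L¹(𝒳, ℙ_X) uniformly in y, the map y ↦ ℙ_X(·|Y=y) is continuous with respect to the Hellinger distance at every point ŷ with p_Y(ŷ) ≠ 0; i.e. if yₙ → ŷ with p_Y(yₙ), p_Y(ŷ) ≠ 0 then d_Hel(ℙ_X(·|Y=yₙ), ℙ_X(·|Y=ŷ)) → 0. -/
open MeasureTheory TopologicalSpace Filter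

/-- Hellinger continuity of the posterior (Theorem on distributional stability):
under a dominated, a.e.-continuous likelihood, if `yₙ → yhat` with nonvanishing
evidence along the sequence and at the limit, then the Hellinger distance between
the posteriors (whose densities w.r.t. `ℙ_X` are `x ↦ L x y / p_Y y`) tends to
zero. -/
theorem posterior_hellinger_continuous
    {𝒳 𝒴 : Type*} [MetricSpace 𝒳] [CompleteSpace 𝒳] [SeparableSpace 𝒳]
    [MeasurableSpace 𝒳] [BorelSpace 𝒳]
    [MetricSpace 𝒴] [CompleteSpace 𝒴] [SeparableSpace 𝒴]
    [MeasurableSpace 𝒴] [BorelSpace 𝒴]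
    (PX : Measure 𝒳) [IsProbabilityMeasure PX]
    (L : 𝒳 → 𝒴 → ℝ) (hLmeas : Measurable (Function.uncurry L))
    (hLnonneg : ∀ x y, 0 ≤ L x y)
    (g : 𝒳 → ℝ) (hg : Integrable g PX)
    (hbound : ∀ᵐ x ∂PX, ∀ y, L x y ≤ g x)
    (hcont : ∀ᵐ x ∂PX, Continuous fun y => L x y)
    (pY : 𝒴 → ℝ) (hpY : ∀ y, pY y = ∫ x, L x y ∂PX)
    (yhat : 𝒴) (hyhat : pY yhat ≠ 0)
    (yseq : ℕ → 𝒴) (hyseq : Tendsto yseq atTop (nhds yhat))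
    (hseq : ∀ n, pY (yseq n) ≠ 0) :
    Tendsto
      (fun n =>
        Real.sqrt ((1 / 2) *
          ∫ x, (Real.sqrt (L x (yseq n) / pY (yseq n)) -
                Real.sqrt (L x yhat / pY yhat)) ^ 2 ∂PX))
      atTop (nhds 0) := by
  have hLy : ∀ y, Measurable fun x => L x y := fun y =>
    hLmeas.comp (measurable_id.prodMk measurable_const)
  have hnn : 0 ≤ pY yhat := by
    rw [hpY]; exact integral_nonneg fun x => hLnonneg x yhat
  have hc : 0 < pY yhat := hnn.lt_of_ne (Ne.symm hyhat)
  -- convergence of evidence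
  have hpYtend : Tendsto (fun n => pY (yseq n)) atTop (nhds (pY yhat)) := by
    simp only [hpY]
    refine tendsto_integral_filter_of_dominated_convergence g
      (Eventually.of_forall fun n => (hLy _).aestronglyMeasurable) ?_ hg ?_
    · refine Eventually.of_forall fun n => ?_
      filter_upwards [hbound] with x hx
      rw [Real.norm_eq_abs, abs_of_nonneg (hLnonneg x _)]
      exact hx _
    · filter_upwards [hcont] with x hx
      exact (hx.tendsto yhat).comp hyseq
  have hev : ∀ᶠ n in atTop, pY yhat / 2 < pY (yseq n) :=
    hpYtend.eventually (lt_mem_nhds (half_lt_self hc))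
  have hgnn : ∀ᵐ x ∂PX, 0 ≤ g x := by
    filter_upwards [hbound] with x hx
    exact (hLnonneg x yhat).trans (hx yhat)
  have hI : Tendsto
      (fun n => ∫ x, (Real.sqrt (L x (yseq n) / pY (yseq n)) -
          Real.sqrt (L x yhat / pY yhat)) ^ 2 ∂PX) atTop (nhds 0) := by
    have h0 : (0 : ℝ) = ∫ x, (0 : ℝ) ∂PX := by simp
    rw [h0]
    refine tendsto_integral_filter_of_dominated_convergence
      (fun x => 6 / pY yhat * g x) ?_ ?_ (hg.const_mul _) ?_
    · refine Eventually.of_forall fun n => ?_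
      exact ((((hLy _).div_const _).sqrt.sub
        ((hLy yhat).div_const _).sqrt).pow_const 2).aestronglyMeasurable
    · filter_upwards [hev] with n hn
      filter_upwards [hbound, hgnn] with x hx hgx
      have hpn : 0 < pY (yseq n) := lt_trans (by positivity) hn
      set a := Real.sqrt (L x (yseq n) / pY (yseq n))
      set b := Real.sqrt (L x yhat / pY yhat)
      have ha2 : a ^ 2 = L x (yseq n) / pY (yseq n) :=
        Real.sq_sqrt (div_nonneg (hLnonneg _ _) hpn.le)
      have hb2 : b ^ 2 = L x yhat / pY yhat :=
        Real.sq_sqrt (div_nonneg (hLnonneg _ _) hc.le)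
      have hsq : (a - b) ^ 2 ≤ 2 * a ^ 2 + 2 * b ^ 2 := by nlinarith [sq_nonneg (a + b)]
      have h1 : a ^ 2 ≤ 2 * g x / pY yhat := by
        rw [ha2]
        rw [div_le_div_iff₀ hpn hc]
        nlinarith [hx (yseq n)]
      have h2 : b ^ 2 ≤ g x / pY yhat := by
        rw [hb2]
        rw [div_le_div_iff₀ hc hc]
        nlinarith [hx yhat]
      rw [Real.norm_eq_abs, abs_of_nonneg (sq_nonneg _)]
      calc (a - b) ^ 2 ≤ 2 * a ^ 2 + 2 * b ^ 2 := hsq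
        _ ≤ 2 * (2 * g x / pY yhat) + 2 * (g x / pY yhat) := by
            nlinarith
        _ = 6 / pY yhat * g x := by field_simp; ring
    · filter_upwards [hcont] with x hx
      have h1 : Tendsto (fun n => Real.sqrt (L x (yseq n) / pY (yseq n)))
          atTop (nhds (Real.sqrt (L x yhat / pY yhat))) :=
        (Real.continuous_sqrt.tendsto _).comp
          (((hx.tendsto yhat).comp hyseq).div hpYtend hyhat)
      have h2 : Tendsto (fun n => (Real.sqrt (L x (yseq n) / pY (yseq n)) -
          Real.sqrt (L x yhat / pY yhat)) ^ 2) atTop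
          (nhds ((Real.sqrt (L x yhat / pY yhat) -
            Real.sqrt (L x yhat / pY yhat)) ^ 2)) :=
        (h1.sub (tendsto_const_nhds (x := Real.sqrt (L x yhat / pY yhat)))).pow 2
      simpa using h2
  have := (Real.continuous_sqrt.tendsto _).comp (hI.const_mul (1/2 : ℝ))
  simpa [Function.comp_def] using this
end

section
/- Let W : ℝ^n → ℝ^m be linear and R : ℝ^m → [0,∞) satisfy R(z) ≥ C‖z‖^q with C, q > 0, and set E(x) = R(Wx). Then x ↦ exp(−E(x)) is Lebesgue integrable on ℝ^n if and only if W has trivial nullspace. -/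
open MeasureTheory

/-- `t ^ r * exp (-(c * t ^ q)) → 0` as `t → ∞`, for `c, q > 0`. -/
lemma aux_tendsto_rpow_mul_exp {c q r : ℝ} (hc : 0 < c) (hq : 0 < q) :
    Filter.Tendsto (fun t : ℝ => t ^ r * Real.exp (-(c * t ^ q)))
      Filter.atTop (nhds 0) := by
  have h1 : Filter.Tendsto (fun u : ℝ => u ^ (r / q) * Real.exp (-c * u))
      Filter.atTop (nhds 0) := tendsto_rpow_mul_exp_neg_mul_atTop_nhds_zero _ _ hc
  have h2 : Filter.Tendsto (fun t : ℝ => t ^ q) Filter.atTop Filter.atTop :=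
    tendsto_rpow_atTop hq
  refine (h1.comp h2).congr' ?_
  filter_upwards [Filter.eventually_ge_atTop (0 : ℝ)] with t ht
  simp only [Function.comp_apply]
  rw [← Real.rpow_mul ht]
  congr 2
  · field_simp
  · ring

/-- `(1+t) ^ r * exp (-(c * t ^ q)) → 0` as `t → ∞`, for `c, q > 0`, `r ≥ 0`. -/
lemma aux_tendsto_one_add_rpow_mul_exp {c q r : ℝ} (hc : 0 < c) (hq : 0 < q)
    (hr : 0 ≤ r) :
    Filter.Tendsto (fun t : ℝ => (1 + t) ^ r * Real.exp (-(c * t ^ q)))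
      Filter.atTop (nhds 0) := by
  have hg := aux_tendsto_rpow_mul_exp (c := c) (q := q) (r := r) hc hq
  have hg' : Filter.Tendsto (fun t : ℝ => 2 ^ r * (t ^ r * Real.exp (-(c * t ^ q))))
      Filter.atTop (nhds 0) := by
    have := hg.const_mul (2 ^ r : ℝ)
    simpa using this
  refine squeeze_zero' ?_ ?_ hg'
  · filter_upwards [Filter.eventually_ge_atTop (0 : ℝ)] with t ht
    positivity
  · filter_upwards [Filter.eventually_ge_atTop (1 : ℝ)] with t ht
    have ht0 : (0 : ℝ) ≤ t := le_trans zero_le_one ht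
    have h12 : (1 : ℝ) + t ≤ 2 * t := by linarith
    have : (1 + t) ^ r ≤ (2 * t) ^ r :=
      Real.rpow_le_rpow (by linarith) h12 hr
    calc (1 + t) ^ r * Real.exp (-(c * t ^ q))
        ≤ (2 * t) ^ r * Real.exp (-(c * t ^ q)) := by
          exact mul_le_mul_of_nonneg_right this (Real.exp_nonneg _)
      _ = 2 ^ r * (t ^ r * Real.exp (-(c * t ^ q))) := by
          rw [Real.mul_rpow (by norm_num) ht0]; ring

/-- The function `exp (-(c * ‖x‖ ^ q))` (with `c, q > 0`, real exponent `q`)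
is integrable on `Fin n → ℝ`. -/
lemma aux_integrable_exp_neg_mul_rpow_norm {n : ℕ} {c q : ℝ} (hc : 0 < c) (hq : 0 < q) :
    Integrable (fun x : Fin n → ℝ => Real.exp (-(c * ‖x‖ ^ q)))
      (volume : Measure (Fin n → ℝ)) := by
  set r : ℝ := (n : ℝ) + 1 with hr
  have hr0 : 0 ≤ r := by positivity
  have hint : Integrable (fun x : Fin n → ℝ => (1 + ‖x‖) ^ (-r)) volume := by
    apply integrable_one_add_norm
    rw [Module.finrank_fin_fun]
    exact lt_add_one _
  set φ : ℝ → ℝ := fun t => (1 + t) ^ r * Real.exp (-(c * t ^ q)) with hφ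
  have hφcont : Continuous φ := by
    apply Continuous.mul
    · exact (continuous_const.add continuous_id).rpow_const fun t => Or.inr hr0
    · exact Real.continuous_exp.comp
        ((continuous_const.mul (continuous_id.rpow_const fun t => Or.inr hq.le)).neg)
  have hlim := aux_tendsto_one_add_rpow_mul_exp (c := c) (q := q) (r := r) hc hq hr0
  obtain ⟨T, hT⟩ := Filter.eventually_atTop.mp (hlim.eventually_lt_const zero_lt_one)
  obtain ⟨M, hM⟩ := (isCompact_Icc (a := (0 : ℝ)) (b := T)).exists_bound_of_continuousOn
    hφcont.continuousOn
  set M' : ℝ := max M 1 with hM'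
  have hbound : ∀ t : ℝ, 0 ≤ t → φ t ≤ M' := by
    intro t ht
    rcases le_total t T with h | h
    · exact le_trans (le_trans (le_abs_self _) (hM t ⟨ht, h⟩)) (le_max_left _ _)
    · exact le_trans (hT t h).le (le_max_right _ _)
  have key : ∀ x : Fin n → ℝ,
      Real.exp (-(c * ‖x‖ ^ q)) ≤ M' * (1 + ‖x‖) ^ (-r) := by
    intro x
    have h1 : (0 : ℝ) < 1 + ‖x‖ := by positivity
    have h2 : (0 : ℝ) < (1 + ‖x‖) ^ r := Real.rpow_pos_of_pos h1 _
    have h3 : (1 + ‖x‖) ^ r * Real.exp (-(c * ‖x‖ ^ q)) ≤ M' :=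
      hbound ‖x‖ (norm_nonneg x)
    rw [Real.rpow_neg h1.le]
    calc Real.exp (-(c * ‖x‖ ^ q))
        = ((1 + ‖x‖) ^ r * Real.exp (-(c * ‖x‖ ^ q))) * ((1 + ‖x‖) ^ r)⁻¹ := by
          field_simp
      _ ≤ M' * ((1 + ‖x‖) ^ r)⁻¹ :=
          mul_le_mul_of_nonneg_right h3 (by positivity)
  refine Integrable.mono' (hint.const_mul M') ?_ ?_
  · refine (Real.continuous_exp.comp ?_).aestronglyMeasurable
    exact (continuous_const.mul (continuous_norm.rpow_const fun x => Or.inr hq.le)).neg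
  · filter_upwards with x
    rw [Real.norm_eq_abs, abs_of_nonneg (Real.exp_nonneg _)]
    exact key x

/-- For `E x = R (W x)` with `W` linear and `R ≥ C‖·‖^q` (`C, q > 0`),
`x ↦ exp (−E x)` is Lebesgue integrable on `ℝⁿ` if and only if `W` has
trivial nullspace. -/
theorem composite_energy_integrable_iff_trivial_kernel
    {n m : ℕ} (W : (Fin n → ℝ) →ₗ[ℝ] (Fin m → ℝ))
    (R : (Fin m → ℝ) → ℝ) (hRmeas : Measurable R)
    (hRnonneg : ∀ z, 0 ≤ R z)
    (C q : ℝ) (hC : 0 < C) (hq : 0 < q)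
    (hgrowth : ∀ z, C * ‖z‖ ^ q ≤ R z) :
    Integrable (fun x => Real.exp (-(R (W x)))) (volume : Measure (Fin n → ℝ))
      ↔ LinearMap.ker W = ⊥ := by
  have hWcont : Continuous W := W.continuous_of_finiteDimensional
  have hfmeas : Measurable fun x : Fin n → ℝ => Real.exp (-(R (W x))) :=
    Real.measurable_exp.comp ((hRmeas.comp hWcont.measurable).neg)
  constructor
  · -- integrable → trivial kernel
    intro hInt
    by_contra hker
    obtain ⟨v, hvker, hv0⟩ := (Submodule.ne_bot_iff _).mp hker
    have hWv : W v = 0 := hvker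
    obtain ⟨i, hvi'⟩ := Function.ne_iff.mp hv0
    have hvi : v i ≠ 0 := by simpa using hvi'
    set f : (Fin n → ℝ) → ℝ := fun x => Real.exp (-(R (W x))) with hf
    set S : ℕ → Set (Fin n → ℝ) := fun k => {x | x i ∈ Set.Ico (k : ℝ) (k + 1)}
      with hS
    have hSmeas : ∀ k, MeasurableSet (S k) := fun k =>
      (measurable_pi_apply i) measurableSet_Ico
    have hSdisj : Pairwise (Function.onFun Disjoint S) := by
      intro k l hkl
      refine Set.disjoint_left.mpr fun x hxk hxl => hkl ?_
      have h1 : k = ⌊x i⌋₊ := by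
        symm; rw [Nat.floor_eq_iff (le_trans (Nat.cast_nonneg k) hxk.1)]
        exact ⟨hxk.1, hxk.2⟩
      have h2 : l = ⌊x i⌋₊ := by
        symm; rw [Nat.floor_eq_iff (le_trans (Nat.cast_nonneg l) hxl.1)]
        exact ⟨hxl.1, hxl.2⟩
      rw [h1, h2]
    -- translation invariance: each slab contributes the same amount
    have htrans : ∀ k : ℕ,
        ∫⁻ x in S k, ENNReal.ofReal (f x) = ∫⁻ x in S 0, ENNReal.ofReal (f x) := by
      intro k
      set ck : Fin n → ℝ := ((k : ℝ) / v i) • v with hck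
      have hmp : MeasurePreserving (fun x : Fin n → ℝ => x + ck) volume volume :=
        measurePreserving_add_right volume ck
      have hemb : MeasurableEmbedding (fun x : Fin n → ℝ => x + ck) :=
        (MeasurableEquiv.addRight ck).measurableEmbedding
      have hpre : (fun x : Fin n → ℝ => x + ck) ⁻¹' (S k) = S 0 := by
        ext x
        simp only [hS, Set.mem_preimage, Set.mem_setOf_eq, Set.mem_Ico, Pi.add_apply,
          hck, Pi.smul_apply, smul_eq_mul]
        have : (k : ℝ) / v i * v i = k := div_mul_cancel₀ _ hvi
        rw [this]
        push_cast
        constructor <;> intro h <;> constructor <;> linarith [h.1, h.2]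
      have hfinv : ∀ x, f (x + ck) = f x := by
        intro x
        simp only [hf]
        congr 2
        rw [map_add, LinearMap.map_smul, hWv, smul_zero, add_zero]
      calc ∫⁻ x in S k, ENNReal.ofReal (f x)
          = ∫⁻ x in (fun x => x + ck) ⁻¹' (S k),
              ENNReal.ofReal (f (x + ck)) :=
            (hmp.setLIntegral_comp_preimage_emb hemb
              (fun y => ENNReal.ofReal (f y)) (S k)).symm
        _ = ∫⁻ x in S 0, ENNReal.ofReal (f x) := by
            rw [hpre]
            exact setLIntegral_congr_fun (hSmeas 0)
              (fun x _ => by simp only [hfinv])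
    -- the base slab has positive integral
    have hS0vol : (1 : ENNReal) ≤ volume (S 0) := by
      have hsub : (Set.univ.pi fun _ : Fin n => Set.Ico (0 : ℝ) 1) ⊆ S 0 := by
        intro x hx
        have := hx i (Set.mem_univ i)
        simp only [hS, Set.mem_setOf_eq, Set.mem_Ico] at *
        exact ⟨by exact_mod_cast this.1, by push_cast; linarith [this.2]⟩
      calc (1 : ENNReal) = volume (Set.univ.pi fun _ : Fin n => Set.Ico (0 : ℝ) 1) := by
            rw [volume_pi_pi]
            simp [Real.volume_Ico]
        _ ≤ volume (S 0) := measure_mono hsub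
    have hc0pos : 0 < ∫⁻ x in S 0, ENNReal.ofReal (f x) := by
      rcases eq_or_lt_of_le (show (0 : ENNReal) ≤ ∫⁻ x in S 0, ENNReal.ofReal (f x) from zero_le) with h | h
      · exfalso
        have h0 : ∫⁻ x in S 0, ENNReal.ofReal (f x) = 0 := h.symm
        rw [setLIntegral_eq_zero_iff (hSmeas 0) hfmeas.ennreal_ofReal] at h0
        rw [ae_iff] at h0
        have hset : {x | ¬ (x ∈ S 0 → ENNReal.ofReal (f x) = 0)} = S 0 := by
          ext x
          simp only [Set.mem_setOf_eq, Classical.not_imp,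
            ENNReal.ofReal_eq_zero, not_le]
          exact ⟨fun h => h.1, fun h => ⟨h, Real.exp_pos _⟩⟩
        rw [hset] at h0
        rw [h0] at hS0vol
        exact absurd hS0vol (by simp)
      · exact h
    -- sum over slabs diverges
    have htop : (∫⁻ x, ENNReal.ofReal (f x)) = ⊤ := by
      refine top_unique ?_
      calc (⊤ : ENNReal) = ∑' _ : ℕ, ∫⁻ x in S 0, ENNReal.ofReal (f x) :=
            (ENNReal.tsum_const_eq_top_of_ne_zero hc0pos.ne').symm
        _ = ∑' k : ℕ, ∫⁻ x in S k, ENNReal.ofReal (f x) := by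
            exact tsum_congr fun k => (htrans k).symm
        _ = ∫⁻ x in ⋃ k, S k, ENNReal.ofReal (f x) :=
            (lintegral_iUnion hSmeas hSdisj _).symm
        _ ≤ ∫⁻ x, ENNReal.ofReal (f x) :=
            lintegral_mono' Measure.restrict_le_self le_rfl
    have hfin := hInt.2
    rw [hasFiniteIntegral_iff_ofReal (Filter.Eventually.of_forall fun x =>
      (Real.exp_nonneg _))] at hfin
    exact absurd htop hfin.ne
  · -- trivial kernel → integrable
    intro hker
    obtain ⟨K, hK0, hKanti⟩ := W.exists_antilipschitzWith hker
    set c : ℝ := C * ((K : ℝ)⁻¹) ^ q with hc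
    have hKpos : (0 : ℝ) < (K : ℝ) := hK0
    have hcpos : 0 < c := by
      apply mul_pos hC
      exact Real.rpow_pos_of_pos (inv_pos.mpr hKpos) _
    refine Integrable.mono' (aux_integrable_exp_neg_mul_rpow_norm hcpos hq)
      hfmeas.aestronglyMeasurable ?_
    filter_upwards with x
    rw [Real.norm_eq_abs, abs_of_nonneg (Real.exp_nonneg _)]
    apply Real.exp_le_exp.mpr
    rw [neg_le_neg_iff]
    calc c * ‖x‖ ^ q = C * ((K : ℝ)⁻¹ * ‖x‖) ^ q := by
          rw [Real.mul_rpow (by positivity) (norm_nonneg x)]; ring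
      _ ≤ C * ‖W x‖ ^ q := by
          apply mul_le_mul_of_nonneg_left _ hC.le
          apply Real.rpow_le_rpow (by positivity) _ hq.le
          rw [inv_mul_le_iff₀ hKpos]
          have h := hKanti.le_mul_dist x 0
          simpa [dist_eq_norm, map_zero] using h
      _ ≤ R (W x) := hgrowth _
end
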